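/- If z ∈ End(V^{⊗n}) is R-symmetric for an invertible R satisfying the Yang–Baxter equation, and Ω ∈ End(V^{⊗n}) is invertible with R_{i,i+1} Ω = τ_{i,i+1}(Ω) R̃_{i,i+1} for all 1 ≤ i < n (where R̃ = τ(F)⁻¹ R F for some invertible F), then Ω⁻¹ z Ω is R̃-symmetric: R̃_{i,i+1} (Ω⁻¹ z Ω) = τ_{i,i+1}(Ω⁻¹ z Ω) R̃_{i,i+1} for all 1 ≤ i < n. -/

import Mathlib

open TensorProduct

noncomputable section
universe u
variable (k V : Type u) [Field k] [AddCommGroup V] [Module k V]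

/-- The iterated tensor power `V^{⊗n}` (with `V^{⊗0} = k`), bundled as a module. -/
def TPow : ℕ → ModuleCat.{u} k
  | 0 => ModuleCat.of k k
  | n + 1 => ModuleCat.of k (V ⊗[k] (TPow n))

/-- The flip `P : V ⊗ V → V ⊗ V`. -/
def flipE : Module.End k (V ⊗[k] V) := (TensorProduct.comm k V V).toLinearMap

/-- `τ(X) = P X P` on `End(V ⊗ V)`. -/
def tauE (X : Module.End k (V ⊗[k] V)) : Module.End k (V ⊗[k] V) :=
  flipE k V * X * flipE k V

/-- The embedding of `X ∈ End(V ⊗ V)` into `End(V^{⊗n})` acting on the adjacent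
pair of tensor factors `(i+1, i+2)` (`i` is 0-based: `i = 0` gives `X₁₂`). -/
def adjLeg (X : Module.End k (V ⊗[k] V)) : (n i : ℕ) → Module.End k (TPow k V n)
  | 0, _ => 1
  | 1, _ => 1
  | (n + 2), 0 =>
      (TensorProduct.assoc k V V (TPow k V n)).toLinearMap ∘ₗ
        LinearMap.rTensor (TPow k V n) X ∘ₗ
        (TensorProduct.assoc k V V (TPow k V n)).symm.toLinearMap
  | (n + 2), (i + 1) => LinearMap.lTensor V (adjLeg X (n + 1) i)

/-!
Write `a x = σ(x) b` for "`x` intertwines `b` with `a`", where `σ` is the conjugation by the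
flip on the legs `i, i+1`. Such intertwiners compose like morphisms of a groupoid
(`a x = σ(x) b` and `b y = σ(y) c` give `a xy = σ(xy) c`), and the inverse of an invertible
intertwiner from `b` to `a` intertwines `a` with `b`. The `R`-symmetric `z` intertwines `R`
with itself and `Ω` intertwines `R̃` with `R`, so `Ω⁻¹ z Ω` intertwines `R̃` with itself.
-/

section Intertwiner

variable {M : Type*} [Monoid M]

def conjInvolution (p : M) (hp : p * p = 1) : M →* M where
  toFun x := p * x * p
  map_one' := by rw [mul_one, hp]
  map_mul' x y := by
    calc p * (x * y) * p = p * x * (p * p) * y * p := by rw [hp, mul_one, mul_assoc p x]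
      _ = p * x * p * (p * y * p) := by simp only [mul_assoc]

def IsIntertwiner (σ : M →* M) (a b x : M) : Prop :=
  a * x = σ x * b

theorem IsIntertwiner.mul {σ : M →* M} {a b c x y : M} (hx : IsIntertwiner σ a b x)
    (hy : IsIntertwiner σ b c y) : IsIntertwiner σ a c (x * y) := by
  unfold IsIntertwiner at *
  rw [map_mul, ← mul_assoc, hx, mul_assoc, hy, mul_assoc]

theorem IsIntertwiner.inv {σ : M →* M} {a b x x' : M} (hx : IsIntertwiner σ a b x)
    (h : x * x' = 1) (h' : x' * x = 1) : IsIntertwiner σ b a x' := by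
  unfold IsIntertwiner at *
  calc b * x' = σ (x' * x) * b * x' := by rw [h', map_one, one_mul]
    _ = σ x' * (a * x) * x' := by rw [hx, map_mul, mul_assoc (σ x')]
    _ = σ x' * a := by rw [mul_assoc, mul_assoc, h, mul_one]

end Intertwiner

theorem adjLeg_mul (X Y : Module.End k (V ⊗[k] V)) :
    ∀ n i, adjLeg k V (X * Y) n i = adjLeg k V X n i * adjLeg k V Y n i
  | 0, _ | 1, _ => (mul_one 1).symm
  | n + 2, 0 => by
      let e := (TensorProduct.assoc k V V (TPow k V n)).conjRingEquiv
      exact (congrArg e (LinearMap.rTensor_mul _ X Y)).trans (map_mul e _ _)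
  | n + 2, i + 1 => (congrArg _ (adjLeg_mul X Y (n + 1) i)).trans (LinearMap.lTensor_mul _ _ _)

theorem adjLeg_one : ∀ n i, adjLeg k V 1 n i = 1
  | 0, _ | 1, _ => rfl
  | n + 2, 0 => by
      let e := (TensorProduct.assoc k V V (TPow k V n)).conjRingEquiv
      exact (congrArg e (LinearMap.rTensor_id _ _)).trans (map_one e)
  | n + 2, i + 1 => (congrArg _ (adjLeg_one (n + 1) i)).trans (LinearMap.lTensor_id _ _)

theorem flipE_mul_self : flipE k V * flipE k V = 1 := by
  ext a b
  simp [flipE]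

theorem adjLeg_flipE_mul_self (n i : ℕ) :
    adjLeg k V (flipE k V) n i * adjLeg k V (flipE k V) n i = 1 := by
  rw [← adjLeg_mul, flipE_mul_self, adjLeg_one]

theorem conj_rSym
    (R F F' : Module.End k (V ⊗[k] V))
    (n : ℕ)
    (z Ω Ωinv : Module.End k (TPow k V n))
    (hΩ : Ω * Ωinv = 1) (hΩ2 : Ωinv * Ω = 1)
    (hz : ∀ i : ℕ, i + 2 ≤ n →
      adjLeg k V R n i * z =
        (adjLeg k V (flipE k V) n i * z * adjLeg k V (flipE k V) n i) * adjLeg k V R n i)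
    (hint : ∀ i : ℕ, i + 2 ≤ n →
      adjLeg k V R n i * Ω =
        (adjLeg k V (flipE k V) n i * Ω * adjLeg k V (flipE k V) n i) *
          adjLeg k V (tauE k V F' * R * F) n i) :
    ∀ i : ℕ, i + 2 ≤ n →
      adjLeg k V (tauE k V F' * R * F) n i * (Ωinv * z * Ω) =
        (adjLeg k V (flipE k V) n i * (Ωinv * z * Ω) * adjLeg k V (flipE k V) n i) *
          adjLeg k V (tauE k V F' * R * F) n i := by
  intro i hi
  let τ := conjInvolution _ (adjLeg_flipE_mul_self k V n i)
  have hzτ : IsIntertwiner τ _ _ z := hz i hi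
  have hΩτ : IsIntertwiner τ _ _ Ω := hint i hi
  exact ((hΩτ.inv hΩ hΩ2).mul hzτ).mul hΩτ
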